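/- Nesting inequalities (Corollary 3.11, item 1, finite-difference form): for all Borel sets A₁, A₂ ⊆ ℝ, define N(p,q) := ℙ( m₀(1,1,U) ∈ A₁ and m₁(1,1,U) ∈ A₂ and V₀ ≤ p and V₁ ≤ q ) and M(p,q) := ℙ( m₀(1,0,U) ∈ A₁ and m₁(0,1,U) ∈ A₂ and V₀ ≤ p and V₁ > q ). Then for all 0 ≤ p ≤ p' ≤ 1 and 0 ≤ q ≤ q' ≤ 1: N(p',q') − N(p',q) − N(p,q') + N(p,q) ≥ 0 and M(p',q') − M(p',q) − M(p,q') + M(p,q) ≤ 0. (These are the testable sign restrictions on the double differences—hence on the mixed second partial derivatives, when they exist—of the observationally identified conditional joint-outcome functions on the same-treatment and mixed-treatment cells.) -/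
import Mathlib


open MeasureTheory ProbabilityTheory

lemma toReal_union_aux {Ω : Type*} [MeasurableSpace Ω] (μ : Measure Ω) [IsFiniteMeasure μ]
    {X Y : Set Ω} (hY : MeasurableSet Y) (h : Disjoint X Y) :
    (μ (X ∪ Y)).toReal = (μ X).toReal + (μ Y).toReal := by
  rw [measure_union h hY, ENNReal.toReal_add (measure_ne_top μ X) (measure_ne_top μ Y)]

/-- Nesting inequalities (Corollary 3.11, item 1, finite-difference form): the double
differences of `N` are nonnegative and the double differences of `M` are nonpositive. -/
theorem nesting_inequalities
    {Ω 𝒰 : Type*} [MeasurableSpace Ω] [MeasurableSpace 𝒰]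
    (μ : Measure Ω) [IsProbabilityMeasure μ]
    (U : Ω → 𝒰) (V₀ V₁ : Ω → ℝ)
    (hU : Measurable U) (hV₀ : Measurable V₀) (hV₁ : Measurable V₁)
    -- V₀, V₁ uniformly distributed on (0,1)
    (hV₀unif : Measure.map V₀ μ = volume.restrict (Set.Ioo (0:ℝ) 1))
    (hV₁unif : Measure.map V₁ μ = volume.restrict (Set.Ioo (0:ℝ) 1))
    -- bounded measurable outcome functions (`true` codes treatment 1, `false` codes 0)
    (m₀ m₁ : Bool → Bool → 𝒰 → ℝ)
    (hm₀ : ∀ d d', Measurable (m₀ d d')) (hm₁ : ∀ d d', Measurable (m₁ d d'))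
    (hm₀_bdd : ∃ B, ∀ d d' u, |m₀ d d' u| ≤ B) (hm₁_bdd : ∃ B, ∀ d d' u, |m₁ d d' u| ≤ B)
    -- Borel sets of outcome values
    (A₁ A₂ : Set ℝ) (hA₁ : MeasurableSet A₁) (hA₂ : MeasurableSet A₂)
    -- the identified joint-outcome functions on the same- and mixed-treatment cells
    (N M : ℝ → ℝ → ℝ)
    (hN : ∀ p q, N p q =
      (μ {ω | m₀ true true (U ω) ∈ A₁ ∧ m₁ true true (U ω) ∈ A₂
            ∧ V₀ ω ≤ p ∧ V₁ ω ≤ q}).toReal)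
    (hM : ∀ p q, M p q =
      (μ {ω | m₀ true false (U ω) ∈ A₁ ∧ m₁ false true (U ω) ∈ A₂
            ∧ V₀ ω ≤ p ∧ q < V₁ ω}).toReal)
    -- the rectangle
    (p p' q q' : ℝ) (hp0 : 0 ≤ p) (hpp' : p ≤ p') (hp'1 : p' ≤ 1)
    (hq0 : 0 ≤ q) (hqq' : q ≤ q') (hq'1 : q' ≤ 1) :
    0 ≤ N p' q' - N p' q - N p q' + N p q ∧
    M p' q' - M p' q - M p q' + M p q ≤ 0 := by
  classical
  set S : Set Ω := {ω | m₀ true true (U ω) ∈ A₁ ∧ m₁ true true (U ω) ∈ A₂} with hSdef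
  set T : Set Ω := {ω | m₀ true false (U ω) ∈ A₁ ∧ m₁ false true (U ω) ∈ A₂} with hTdef
  set E : ℝ → Set Ω := fun r => {ω | V₀ ω ≤ r} with hEdef
  set F : ℝ → Set Ω := fun r => {ω | V₁ ω ≤ r} with hFdef
  set H : ℝ → Set Ω := fun r => {ω | r < V₁ ω} with hHdef
  set D : Set Ω := {ω | p < V₀ ω ∧ V₀ ω ≤ p'} with hDdef
  set G : Set Ω := {ω | q < V₁ ω ∧ V₁ ω ≤ q'} with hGdef
  have hS : MeasurableSet S :=
    (((hm₀ true true).comp hU) hA₁).inter (((hm₁ true true).comp hU) hA₂)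
  have hT : MeasurableSet T :=
    (((hm₀ true false).comp hU) hA₁).inter (((hm₁ false true).comp hU) hA₂)
  have hE : ∀ r, MeasurableSet (E r) := fun r => hV₀ measurableSet_Iic
  have hF : ∀ r, MeasurableSet (F r) := fun r => hV₁ measurableSet_Iic
  have hH : ∀ r, MeasurableSet (H r) := fun r => hV₁ measurableSet_Ioi
  have hmD : MeasurableSet D := hV₀ measurableSet_Ioc
  have hmG : MeasurableSet G := hV₁ measurableSet_Ioc
  -- rewrite N and M in terms of intersections
  have hNset : ∀ r s, {ω | m₀ true true (U ω) ∈ A₁ ∧ m₁ true true (U ω) ∈ A₂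
      ∧ V₀ ω ≤ r ∧ V₁ ω ≤ s} = S ∩ E r ∩ F s := by
    intro r s
    ext ω
    simp only [hSdef, hEdef, hFdef, Set.mem_setOf_eq, Set.mem_inter_iff]
    tauto
  have hMset : ∀ r s, {ω | m₀ true false (U ω) ∈ A₁ ∧ m₁ false true (U ω) ∈ A₂
      ∧ V₀ ω ≤ r ∧ s < V₁ ω} = T ∩ E r ∩ H s := by
    intro r s
    ext ω
    simp only [hTdef, hEdef, hHdef, Set.mem_setOf_eq, Set.mem_inter_iff]
    tauto
  have hN' : ∀ r s, N r s = (μ (S ∩ E r ∩ F s)).toReal := by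
    intro r s; rw [hN r s, hNset r s]
  have hM' : ∀ r s, M r s = (μ (T ∩ E r ∩ H s)).toReal := by
    intro r s; rw [hM r s, hMset r s]
  -- set decompositions
  have eqF : F q' = F q ∪ G := by
    ext ω
    simp only [hFdef, hGdef, Set.mem_setOf_eq, Set.mem_union]
    constructor
    · intro h
      rcases le_or_gt (V₁ ω) q with h' | h'
      · exact Or.inl h'
      · exact Or.inr ⟨h', h⟩
    · rintro (h | ⟨_, h⟩)
      · exact h.trans hqq'
      · exact h
  have disjFG : Disjoint (F q) G := by
    rw [Set.disjoint_left]
    intro ω h1 h2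
    exact absurd h1 (not_le.2 h2.1)
  have eqE : E p' = E p ∪ D := by
    ext ω
    simp only [hEdef, hDdef, Set.mem_setOf_eq, Set.mem_union]
    constructor
    · intro h
      rcases le_or_gt (V₀ ω) p with h' | h'
      · exact Or.inl h'
      · exact Or.inr ⟨h', h⟩
    · rintro (h | ⟨_, h⟩)
      · exact h.trans hpp'
      · exact h
  have disjED : Disjoint (E p) D := by
    rw [Set.disjoint_left]
    intro ω h1 h2
    exact absurd h1 (not_le.2 h2.1)
  have eqH : H q = G ∪ H q' := by
    ext ω
    simp only [hHdef, hGdef, Set.mem_setOf_eq, Set.mem_union]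
    constructor
    · intro h
      rcases le_or_gt (V₁ ω) q' with h' | h'
      · exact Or.inl ⟨h, h'⟩
      · exact Or.inr h'
    · rintro (⟨h, _⟩ | h)
      · exact h
      · exact hqq'.trans_lt h
  have disjGH : Disjoint G (H q') := by
    rw [Set.disjoint_left]
    intro ω h1 h2
    exact absurd h1.2 (not_le.2 h2)
  -- splitting along F
  have splitF : ∀ (A : Set Ω), MeasurableSet A →
      (μ (A ∩ F q')).toReal = (μ (A ∩ F q)).toReal + (μ (A ∩ G)).toReal := by
    intro A hA
    rw [eqF, Set.inter_union_distrib_left]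
    exact toReal_union_aux μ (hA.inter hmG)
      (disjFG.mono Set.inter_subset_right Set.inter_subset_right)
  have splitH : ∀ (A : Set Ω), MeasurableSet A →
      (μ (A ∩ H q)).toReal = (μ (A ∩ G)).toReal + (μ (A ∩ H q')).toReal := by
    intro A hA
    rw [eqH, Set.inter_union_distrib_left]
    exact toReal_union_aux μ (hA.inter (hH q'))
      (disjGH.mono Set.inter_subset_right Set.inter_subset_right)
  -- splitting along E, for the sets intersected with G
  have splitE : ∀ (A : Set Ω), MeasurableSet A →
      (μ (A ∩ E p' ∩ G)).toReal
        = (μ (A ∩ E p ∩ G)).toReal + (μ (A ∩ D ∩ G)).toReal := by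
    intro A hA
    rw [eqE, Set.inter_union_distrib_left, Set.union_inter_distrib_right]
    exact toReal_union_aux μ ((hA.inter hmD).inter hmG)
      (disjED.mono
        (Set.inter_subset_left.trans Set.inter_subset_right)
        (Set.inter_subset_left.trans Set.inter_subset_right))
  constructor
  · -- N part
    have n1 := splitF (S ∩ E p') (hS.inter (hE p'))
    have n2 := splitF (S ∩ E p) (hS.inter (hE p))
    have n3 := splitE S hS
    have hpos : 0 ≤ (μ (S ∩ D ∩ G)).toReal := ENNReal.toReal_nonneg
    rw [hN' p' q', hN' p' q, hN' p q', hN' p q]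
    linarith
  · -- M part
    have m1 := splitH (T ∩ E p') (hT.inter (hE p'))
    have m2 := splitH (T ∩ E p) (hT.inter (hE p))
    have m3 := splitE T hT
    have hpos : 0 ≤ (μ (T ∩ D ∩ G)).toReal := ENNReal.toReal_nonneg
    rw [hM' p' q', hM' p' q, hM' p q', hM' p q]
    linarith
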